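/- arXiv:1401.1559 — 10 statements merged into one kernel-verified Lean document; each statement's English description precedes it below -/
import Mathlib

section
/- Let v : 2^N → ℝ≥0 be a monotone valuation with v(∅)=0 on a finite set N, and let p ∈ ℝ^N_{≥0} be a price vector. Suppose S maximizes v(T) - Σ_{i∈T} p_i over all T ⊆ N. If (1) for every i ∈ S there exists T with i ∉ T and v(S) - p(S) = v(T) - p(T), and (2) for every i ∉ S and every T with i ∈ T, v(S) - p(S) ≥ v(T) - p(T\{i}), then p is a pure Nash equilibrium of the pricing game in which the buyer purchases S: no seller i can strictly increase his utility u_i(p) = p_i·1{i ∈ X(p)} by unilaterally changing p_i, for any demand-consistent decision map X with X(p)=S. -/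
/-!
If seller `i` raises his price to `q` and is still bought, compare the new demanded set `X'` with
a set that avoids `i`. For `i ∈ S`, condition (1) provides a set `T ∌ i` that is optimal at `p`;
its surplus is unaffected by the deviation, so `X'` must beat it, which forces `q ≤ pᵢ`. For
`i ∉ S`, condition (2) says that even with `i` for free no set containing `i` beats `S`, whose
surplus is again unaffected, so `q ≤ 0`.
-/

open Finset Function

section PricingGame

variable {ι : Type*} [DecidableEq ι]

def surplus (v : Finset ι → ℝ) (p : ι → ℝ) (T : Finset ι) : ℝ := v T - ∑ j ∈ T, p j

def IsDemanded (v : Finset ι → ℝ) (p : ι → ℝ) (X : Finset ι) : Prop :=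
  ∀ T, surplus v p T ≤ surplus v p X

variable {v : Finset ι → ℝ} {p : ι → ℝ} {i : ι} {q : ℝ} {S T X : Finset ι}

lemma surplus_eq_of_mem (hi : i ∈ T) :
    surplus v p T = v T - ∑ j ∈ T.erase i, p j - p i := by
  rw [surplus, ← add_sum_erase T p hi]
  ring

lemma surplus_update_of_mem (hi : i ∈ T) :
    surplus v (update p i q) T = v T - ∑ j ∈ T.erase i, p j - q := by
  rw [surplus, sum_update_of_mem hi, sdiff_singleton_eq_erase]
  ring

lemma surplus_update_of_notMem (hi : i ∉ T) : surplus v (update p i q) T = surplus v p T := by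
  rw [surplus, surplus, sum_update_of_notMem hi]

lemma IsDemanded.price_le_of_notMem (hT : IsDemanded v p T) (hiT : i ∉ T)
    (hX : IsDemanded v (update p i q) X) (hiX : i ∈ X) : q ≤ p i := by
  have hXT := hX T
  have hTX := hT X
  rw [surplus_update_of_notMem hiT, surplus_update_of_mem hiX] at hXT
  rw [surplus_eq_of_mem hiX] at hTX
  linarith

lemma IsDemanded.price_nonpos_of_mem (hX : IsDemanded v (update p i q) X) (hiX : i ∈ X)
    (hiS : i ∉ S) (hS : v X - ∑ j ∈ X.erase i, p j ≤ surplus v p S) : q ≤ 0 := by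
  have hSX := hX S
  rw [surplus_update_of_notMem hiS, surplus_update_of_mem hiX] at hSX
  linarith

end PricingGame

theorem stmt0_general {n : ℕ} (v : Finset (Fin n) → ℝ)
    (p : Fin n → ℝ) (hp : ∀ i, 0 ≤ p i)
    (S : Finset (Fin n))
    (hS : ∀ T : Finset (Fin n), v T - ∑ i ∈ T, p i ≤ v S - ∑ i ∈ S, p i)
    (h1 : ∀ i ∈ S, ∃ T : Finset (Fin n), i ∉ T ∧
      v S - ∑ j ∈ S, p j = v T - ∑ j ∈ T, p j)
    (h2 : ∀ i ∉ S, ∀ T : Finset (Fin n), i ∈ T →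
      v T - ∑ j ∈ T.erase i, p j ≤ v S - ∑ j ∈ S, p j)
    (X : (Fin n → ℝ) → Finset (Fin n))
    (hX : ∀ q : Fin n → ℝ, (∀ i, 0 ≤ q i) → ∀ T : Finset (Fin n),
      v T - ∑ i ∈ T, q i ≤ v (X q) - ∑ i ∈ X q, q i)
    (hXp : X p = S) :
    ∀ i : Fin n, ∀ q : ℝ, 0 ≤ q →
      (if i ∈ X (Function.update p i q) then q else 0) ≤
      (if i ∈ X p then p i else 0) := by
  intro i q hq
  have hdem : IsDemanded v (update p i q) (X (update p i q)) :=
    hX _ fun j ↦ by rcases eq_or_ne j i with rfl | hj <;> simp [*]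
  rw [hXp]
  split_ifs with hiX hiS hiS
  · obtain ⟨T, hiT, hST⟩ := h1 i hiS
    have hT : IsDemanded v p T := fun U ↦ (hS U).trans hST.le
    exact hT.price_le_of_notMem hiT hdem hiX
  · exact hdem.price_nonpos_of_mem hiX hiS (h2 i hiS _ hiX)
  · exact hp i
  · exact le_rfl

/-- If `S` is demanded at prices `p` and conditions (1) and (2) hold,
then `p` is a pure Nash equilibrium of the pricing game for any demand-consistent
decision map `X` with `X p = S`. -/
theorem stmt0 {n : ℕ} (v : Finset (Fin n) → ℝ)
    (hmono : ∀ S T : Finset (Fin n), S ⊆ T → v S ≤ v T)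
    (hv0 : v ∅ = 0)
    (p : Fin n → ℝ) (hp : ∀ i, 0 ≤ p i)
    (S : Finset (Fin n))
    (hS : ∀ T : Finset (Fin n), v T - ∑ i ∈ T, p i ≤ v S - ∑ i ∈ S, p i)
    (h1 : ∀ i ∈ S, ∃ T : Finset (Fin n), i ∉ T ∧
      v S - ∑ j ∈ S, p j = v T - ∑ j ∈ T, p j)
    (h2 : ∀ i ∉ S, ∀ T : Finset (Fin n), i ∈ T →
      v T - ∑ j ∈ T.erase i, p j ≤ v S - ∑ j ∈ S, p j)
    (X : (Fin n → ℝ) → Finset (Fin n))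
    (hX : ∀ q : Fin n → ℝ, (∀ i, 0 ≤ q i) → ∀ T : Finset (Fin n),
      v T - ∑ i ∈ T, q i ≤ v (X q) - ∑ i ∈ X q, q i)
    (hXp : X p = S) :
    ∀ i : Fin n, ∀ q : ℝ, 0 ≤ q →
      (if i ∈ X (Function.update p i q) then q else 0) ≤
      (if i ∈ X p then p i else 0) :=
  stmt0_general v p hp S hS h1 h2 X hX hXp
end

section
/- Let v : 2^N → ℝ≥0 be monotone with v(∅)=0, and let F = {p ∈ ℝ^N_{≥0} : p(T) ≤ v(N) - v(N\T) for all T ⊆ N}. If p lies in the Pareto frontier of F, then for every i ∈ N there exists a set T ⊆ N with i ∉ T such that v(T) - p(T) = v(N) - p(N). -/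
/-!
Let `S₀` maximise the surplus `v S - p(S)` among the sets avoiding `i`, and let `ε ≥ 0` be its gap
to the surplus `v N - p(N)` of the grand coalition. Raising `p i` by `ε` keeps `p` in `F`: the
constraint for `T ∋ i` is the surplus bound for `N \ T`, which avoids `i`. Pareto optimality then
forces `ε = 0`, so `S₀` is the required set.
-/

open Finset

variable {ι : Type*} [DecidableEq ι]

lemma sum_add_pi_single (p : ι → ℝ) (i : ι) (ε : ℝ) (T : Finset ι) :
    ∑ j ∈ T, (p + (Pi.single i ε : ι → ℝ)) j = ∑ j ∈ T, p j + if i ∈ T then ε else 0 := by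
  simp only [Pi.add_apply, sum_add_distrib, sum_pi_single']

lemma le_add_pi_single (p : ι → ℝ) (i : ι) {ε : ℝ} (hε : 0 ≤ ε) :
    p ≤ p + (Pi.single i ε : ι → ℝ) :=
  le_add_of_nonneg_right (Pi.single_nonneg.2 hε)

variable [Fintype ι]

/-- Membership in the set `F` of the statement. -/
def IsFeasiblePrice (v : Finset ι → ℝ) (p : ι → ℝ) : Prop :=
  (∀ i, 0 ≤ p i) ∧ ∀ T : Finset ι, ∑ i ∈ T, p i ≤ v univ - v (univ \ T)

lemma sum_le_sub_compl_iff (v : Finset ι → ℝ) (p : ι → ℝ) (T : Finset ι) :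
    ∑ i ∈ T, p i ≤ v univ - v (univ \ T) ↔
      v (univ \ T) - ∑ i ∈ univ \ T, p i ≤ v univ - ∑ i, p i := by
  have hsplit := sum_sdiff (f := p) (subset_univ T)
  constructor <;> intro h <;> linarith

lemma surplus_le_of_forall_sum_le {v : Finset ι → ℝ} {p : ι → ℝ}
    (hp : ∀ T : Finset ι, ∑ i ∈ T, p i ≤ v univ - v (univ \ T)) (S : Finset ι) :
    v S - ∑ j ∈ S, p j ≤ v univ - ∑ j, p j := by
  simpa using (sum_le_sub_compl_iff v p (univ \ S)).1 (hp _)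

lemma IsFeasiblePrice.add_pi_single {v : Finset ι → ℝ} {p : ι → ℝ} (hp : IsFeasiblePrice v p)
    {i : ι} {ε : ℝ} (hε : 0 ≤ ε)
    (hgap : ∀ S : Finset ι, i ∉ S → v S - ∑ j ∈ S, p j + ε ≤ v univ - ∑ j, p j) :
    IsFeasiblePrice v (p + (Pi.single i ε : ι → ℝ)) := by
  refine ⟨fun j => (hp.1 j).trans (le_add_pi_single p i hε j), fun T => ?_⟩
  rw [sum_add_pi_single]
  split_ifs with hiT
  · have hcompl := hgap (univ \ T) (by simp [hiT])
    have hsplit := sum_sdiff (f := p) (subset_univ T)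
    linarith
  · simpa using hp.2 T

lemma exists_notMem_forall_surplus_le (v : Finset ι → ℝ) (p : ι → ℝ) (i : ι) :
    ∃ S₀ : Finset ι, i ∉ S₀ ∧
      ∀ S : Finset ι, i ∉ S → v S - ∑ j ∈ S, p j ≤ v S₀ - ∑ j ∈ S₀, p j := by
  obtain ⟨S₀, hS₀, hmax⟩ := (univ.filter fun S : Finset ι => i ∉ S).exists_max_image
    (fun S => v S - ∑ j ∈ S, p j) ⟨∅, by simp⟩
  exact ⟨S₀, (mem_filter.1 hS₀).2, fun S hS => hmax S (by simpa using hS)⟩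

theorem stmt2_general {n : ℕ} (v : Finset (Fin n) → ℝ)
    (p : Fin n → ℝ)
    (hpF : (∀ i, 0 ≤ p i) ∧
      ∀ T : Finset (Fin n), ∑ i ∈ T, p i ≤ v Finset.univ - v (Finset.univ \ T))
    (hpareto : ¬ ∃ p' : Fin n → ℝ, ((∀ i, 0 ≤ p' i) ∧
        ∀ T : Finset (Fin n), ∑ i ∈ T, p' i ≤ v Finset.univ - v (Finset.univ \ T)) ∧
      (∀ i, p i ≤ p' i) ∧ ∑ i, p i < ∑ i, p' i) :
    ∀ i : Fin n, ∃ T : Finset (Fin n), i ∉ T ∧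
      v T - ∑ j ∈ T, p j = v Finset.univ - ∑ j, p j := by
  intro i
  obtain ⟨S₀, hiS₀, hmax⟩ := exists_notMem_forall_surplus_le v p i
  set ε := (v univ - ∑ j, p j) - (v S₀ - ∑ j ∈ S₀, p j)
  have hε : 0 ≤ ε := sub_nonneg.2 (surplus_le_of_forall_sum_le hpF.2 S₀)
  have hfeas : IsFeasiblePrice v (p + (Pi.single i ε : Fin n → ℝ)) :=
    IsFeasiblePrice.add_pi_single hpF hε fun S hS => by linarith [hmax S hS]
  have hε_nonpos : ε ≤ 0 := not_lt.1 fun hεpos =>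
    hpareto ⟨_, hfeas, le_add_pi_single p i hε, by
      rw [sum_add_pi_single, if_pos (mem_univ i)]
      linarith⟩
  exact ⟨S₀, hiS₀, by linarith⟩

/-- If `p` lies in the Pareto frontier of `F`, then for every `i`
there is a set `T` not containing `i` with `v(T) - p(T) = v(N) - p(N)`. -/
theorem stmt2 {n : ℕ} (v : Finset (Fin n) → ℝ)
    (hmono : ∀ S T : Finset (Fin n), S ⊆ T → v S ≤ v T)
    (hv0 : v ∅ = 0)
    (p : Fin n → ℝ)
    (hpF : (∀ i, 0 ≤ p i) ∧
      ∀ T : Finset (Fin n), ∑ i ∈ T, p i ≤ v Finset.univ - v (Finset.univ \ T))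
    (hpareto : ¬ ∃ p' : Fin n → ℝ, ((∀ i, 0 ≤ p' i) ∧
        ∀ T : Finset (Fin n), ∑ i ∈ T, p' i ≤ v Finset.univ - v (Finset.univ \ T)) ∧
      (∀ i, p i ≤ p' i) ∧ ∑ i, p i < ∑ i, p' i) :
    ∀ i : Fin n, ∃ T : Finset (Fin n), i ∉ T ∧
      v T - ∑ j ∈ T, p j = v Finset.univ - ∑ j, p j :=
  stmt2_general v p hpF hpareto
end

section
/- In the Nash bargaining pricing game with n ≥ 1 sellers, where v(N) = c > 0 and v(S) = 0 for every S ≠ N, and the buyer buys N when Σ_i p_i ≤ c and buys ∅ otherwise, the set of pure Nash equilibria equals {p ∈ ℝ^n_{≥0} : Σ_i p_i = c} ∪ {p ∈ ℝ^n_{≥0} : Σ_i p_i ≥ c + max_i p_i}. -/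
/-- In the Nash bargaining pricing game (value `c > 0` for the full
set, `0` otherwise; the buyer buys everything iff the total price is at most `c`),
the pure Nash equilibria are exactly the profiles with `∑ p = c` or
`∑ p ≥ c + max_i p_i`. -/
theorem stmt3 {n : ℕ} (hn : 1 ≤ n) (c : ℝ) (hc : 0 < c)
    (p : Fin n → ℝ) (hp : ∀ i, 0 ≤ p i) :
    (∀ i : Fin n, ∀ q : ℝ, 0 ≤ q →
        (if (∑ j, Function.update p i q j) ≤ c then Function.update p i q i else 0) ≤
        (if (∑ j, p j) ≤ c then p i else 0)) ↔
      ((∑ j, p j = c) ∨ (∀ i, c + p i ≤ ∑ j, p j)) := by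
  have hsum : ∀ (i : Fin n) (q : ℝ),
      ∑ j, Function.update p i q j = (∑ j, p j) - p i + q := by
    intro i q
    rw [Finset.sum_update_of_mem (Finset.mem_univ i),
      Finset.sum_sdiff_eq_sub (Finset.subset_univ _), Finset.sum_singleton]
    ring
  set S := ∑ j, p j with hS
  constructor
  · intro h
    have hge : c ≤ S := by
      by_contra hlt
      push_neg at hlt
      set i : Fin n := ⟨0, hn⟩
      have hq : (0:ℝ) ≤ c - S + p i := by linarith [hp i]
      have := h i (c - S + p i) hq
      rw [hsum i, Function.update_self] at this
      have hcond : S - p i + (c - S + p i) ≤ c := by linarith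
      rw [if_pos hcond, if_pos (le_of_lt hlt)] at this
      linarith
    rcases eq_or_lt_of_le hge with heq | hlt
    · exact Or.inl heq.symm
    · right
      intro i
      by_contra hbad
      push_neg at hbad
      have hq : (0:ℝ) ≤ c - S + p i := by linarith
      have := h i (c - S + p i) hq
      rw [hsum i, Function.update_self] at this
      have hcond : S - p i + (c - S + p i) ≤ c := by linarith
      rw [if_pos hcond, if_neg (by linarith : ¬ S ≤ c)] at this
      linarith
  · intro h i q hq
    rw [hsum i, Function.update_self]
    rcases h with heq | hge
    · rw [if_pos (le_of_eq heq)]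
      split_ifs with hcond
      · linarith
      · exact hp i
    · have hgt : c < S := by
        rcases lt_or_eq_of_le (by linarith [hge i, hp i] : c ≤ S) with h' | h'
        · exact h'
        · exfalso
          have hall : ∀ j, p j = 0 := fun j =>
            le_antisymm (by linarith [hge j]) (hp j)
          have : S = 0 := by
            rw [hS]; exact Finset.sum_eq_zero fun j _ => hall j
          linarith
      rw [if_neg (by linarith : ¬ S ≤ c)]
      split_ifs with hcond
      · linarith [hge i]
      · exact le_refl 0
end

section
/- Let v be monotone submodular on finite N with v(∅)=0. In the pricing game with decision map X satisfying X(p) ∈ argmax_S (v(S)-p(S)), every pure Nash equilibrium price vector p satisfies p_i ≥ v(N) - v(N\{i}) for every seller i. -/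
open Finset

section Submodular

variable {α : Type*} [DecidableEq α] (v : Finset α → ℝ)

theorem marginal_antitone_of_submodular
    (hsub : ∀ S T : Finset α, v (S ∪ T) + v (S ∩ T) ≤ v S + v T)
    {A B : Finset α} {i : α} (hAB : A ⊆ B) (hiB : i ∉ B) :
    v (insert i B) - v B ≤ v (insert i A) - v A := by
  have hunion : insert i A ∪ B = insert i B := by
    rw [insert_union, union_eq_right.mpr hAB]
  have hinter : insert i A ∩ B = A := by
    rw [insert_inter_of_notMem hiB, inter_eq_left.mpr hAB]
  have := hsub (insert i A) B
  rw [hunion, hinter] at this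
  linarith

/-- Adding such a seller to any bundle without it strictly raises the surplus. -/
theorem mem_of_surplus_maximizer_of_lt_marginal [Fintype α]
    (hsub : ∀ S T : Finset α, v (S ∪ T) + v (S ∩ T) ≤ v S + v T)
    {q : α → ℝ} {S : Finset α}
    (hS : ∀ T : Finset α, v T - ∑ j ∈ T, q j ≤ v S - ∑ j ∈ S, q j)
    {i : α} (hqi : q i < v univ - v (univ.erase i)) : i ∈ S := by
  by_contra hiS
  have hmarg : v univ - v (univ.erase i) ≤ v (insert i S) - v S := by
    simpa only [insert_erase (mem_univ i)] using
      marginal_antitone_of_submodular v hsub (subset_erase.mpr ⟨subset_univ S, hiS⟩)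
        (notMem_erase i univ)
  have := hS (insert i S)
  rw [sum_insert hiS] at this
  linarith

end Submodular

theorem stmt6_general {n : ℕ} (v : Finset (Fin n) → ℝ)
    (hsub : ∀ S T : Finset (Fin n), v (S ∪ T) + v (S ∩ T) ≤ v S + v T)
    (X : (Fin n → ℝ) → Finset (Fin n))
    (hXd : ∀ q : Fin n → ℝ, (∀ i, 0 ≤ q i) → ∀ T : Finset (Fin n),
      v T - ∑ i ∈ T, q i ≤ v (X q) - ∑ i ∈ X q, q i)
    (p : Fin n → ℝ) (hp : ∀ i, 0 ≤ p i)
    (hnash : ∀ i : Fin n, ∀ q : ℝ, 0 ≤ q →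
      (if i ∈ X (Function.update p i q) then q else 0) ≤
      (if i ∈ X p then p i else 0)) :
    ∀ i : Fin n, v Finset.univ - v (Finset.univ.erase i) ≤ p i := by
  intro i
  by_contra! hlow
  obtain ⟨q, hpq, hqm⟩ := exists_between hlow
  have hq0 : 0 ≤ q := (hp i).trans hpq.le
  have hnonneg : ∀ j, 0 ≤ Function.update p i q j := by
    intro j
    rcases eq_or_ne j i with rfl | hj
    · simpa using hq0
    · simpa [hj] using hp j
  have hsold : i ∈ X (Function.update p i q) :=
    mem_of_surplus_maximizer_of_lt_marginal v hsub (hXd _ hnonneg) (by simpa using hqm)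
  have hdev := hnash i q hq0
  rw [if_pos hsold] at hdev
  have hpayoff : (if i ∈ X p then p i else 0) ≤ p i := by
    split_ifs
    exacts [le_rfl, hp i]
  linarith

/-- For monotone submodular `v` with `v ∅ = 0`, every pure Nash
equilibrium price vector `p` of the pricing game satisfies
`p i ≥ v(N) - v(N \ {i})` for every seller `i`. -/
theorem stmt6 {n : ℕ} (v : Finset (Fin n) → ℝ)
    (hmono : ∀ S T : Finset (Fin n), S ⊆ T → v S ≤ v T)
    (hsub : ∀ S T : Finset (Fin n), v (S ∪ T) + v (S ∩ T) ≤ v S + v T)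
    (hv0 : v ∅ = 0)
    (X : (Fin n → ℝ) → Finset (Fin n))
    (hXd : ∀ q : Fin n → ℝ, (∀ i, 0 ≤ q i) → ∀ T : Finset (Fin n),
      v T - ∑ i ∈ T, q i ≤ v (X q) - ∑ i ∈ X q, q i)
    (p : Fin n → ℝ) (hp : ∀ i, 0 ≤ p i)
    (hnash : ∀ i : Fin n, ∀ q : ℝ, 0 ≤ q →
      (if i ∈ X (Function.update p i q) then q else 0) ≤
      (if i ∈ X p then p i else 0)) :
    ∀ i : Fin n, v Finset.univ - v (Finset.univ.erase i) ≤ p i :=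
  stmt6_general v hsub X hXd p hp hnash
end

section
/- Let v be monotone submodular with v(∅)=0 and let p be a pure Nash equilibrium of the pricing game with S = X(p). Then for every i ∉ S, v(S ∪ {i}) - v(S) = 0; consequently v(S) = v(N). -/
/-!
If a seller `i` outside the selected set `S = X p` had positive marginal value `m` with respect
to `S`, then at the price `m / 2` buying `S ∪ {i}` would beat every bundle avoiding `i`, so `i`
would be selected and earn `m / 2 > 0` instead of `0`, contradicting equilibrium. Hence all
marginals at `S` vanish, and submodularity spreads this to `v (S ∪ B) ≤ v S` for every `B`.
-/

open Finset

variable {ι : Type*}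

def IsDemand (v : Finset ι → ℝ) (X : (ι → ℝ) → Finset ι) : Prop :=
  ∀ q : ι → ℝ, (∀ i, 0 ≤ q i) → ∀ T : Finset ι, v T - ∑ i ∈ T, q i ≤ v (X q) - ∑ i ∈ X q, q i

variable [DecidableEq ι]

theorem le_of_forall_insert_le {v : Finset ι → ℝ}
    (hsub : ∀ S T : Finset ι, v (S ∪ T) + v (S ∩ T) ≤ v S + v T) {S : Finset ι}
    (hS : ∀ a, a ∉ S → v (insert a S) ≤ v S) (B : Finset ι) : v (S ∪ B) ≤ v S := by
  induction B using Finset.induction_on with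
  | empty => simp
  | @insert a B haB ih =>
    have h_union : insert a S ∪ (S ∪ B) = S ∪ insert a B := by grind
    have h_inter : insert a S ∩ (S ∪ B) = S := by grind
    have h_insert : v (insert a S) ≤ v S := by
      by_cases haS : a ∈ S
      · rw [insert_eq_of_mem haS]
      · exact hS a haS
    have := hsub (insert a S) (S ∪ B)
    rw [h_union, h_inter] at this
    linarith

theorem IsDemand.mem_update_of_lt_marginal {v : Finset ι → ℝ} {X : (ι → ℝ) → Finset ι}
    (hX : IsDemand v X) {p : ι → ℝ} (hp : ∀ j, 0 ≤ p j) {i : ι} (hi : i ∉ X p) {c : ℝ}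
    (hc0 : 0 ≤ c) (hc : c < v (insert i (X p)) - v (X p)) :
    i ∈ X (Function.update p i c) := by
  set p' := Function.update p i c
  have hp' : ∀ j, 0 ≤ p' j := by
    intro j
    rcases eq_or_ne j i with rfl | hji
    · simpa [p'] using hc0
    · simpa [p', Function.update_of_ne hji] using hp j
  by_contra hiT
  have h_insert : ∑ j ∈ insert i (X p), p' j = c + ∑ j ∈ X p, p j := by
    simp only [p', sum_insert hi, Function.update_self, sum_update_of_notMem hi]
  have h_deviate := hX p' hp' (insert i (X p))
  rw [h_insert, sum_update_of_notMem hiT p c] at h_deviate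
  have h_opt := hX p hp (X p')
  linarith

theorem IsDemand.marginal_le_of_nash {v : Finset ι → ℝ} {X : (ι → ℝ) → Finset ι}
    (hX : IsDemand v X) {p : ι → ℝ} (hp : ∀ j, 0 ≤ p j)
    (hnash : ∀ i : ι, ∀ q : ℝ, 0 ≤ q →
      (if i ∈ X (Function.update p i q) then q else 0) ≤ (if i ∈ X p then p i else 0))
    {i : ι} (hi : i ∉ X p) : v (insert i (X p)) ≤ v (X p) := by
  by_contra! hpos
  have h_half_pos : 0 < (v (insert i (X p)) - v (X p)) / 2 := by linarith
  have h_selected := hX.mem_update_of_lt_marginal hp hi h_half_pos.le (by linarith)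
  have := hnash i _ h_half_pos.le
  simp only [h_selected, hi, if_true, if_false] at this
  linarith

theorem stmt7_general {n : ℕ} (v : Finset (Fin n) → ℝ)
    (hmono : ∀ S T : Finset (Fin n), S ⊆ T → v S ≤ v T)
    (hsub : ∀ S T : Finset (Fin n), v (S ∪ T) + v (S ∩ T) ≤ v S + v T)
    (X : (Fin n → ℝ) → Finset (Fin n))
    (hXd : ∀ q : Fin n → ℝ, (∀ i, 0 ≤ q i) → ∀ T : Finset (Fin n),
      v T - ∑ i ∈ T, q i ≤ v (X q) - ∑ i ∈ X q, q i)
    (p : Fin n → ℝ) (hp : ∀ i, 0 ≤ p i)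
    (hnash : ∀ i : Fin n, ∀ q : ℝ, 0 ≤ q →
      (if i ∈ X (Function.update p i q) then q else 0) ≤
      (if i ∈ X p then p i else 0)) :
    (∀ i : Fin n, i ∉ X p → v (insert i (X p)) - v (X p) = 0) ∧
      v (X p) = v Finset.univ := by
  have h_marginal_le : ∀ i, i ∉ X p → v (insert i (X p)) ≤ v (X p) :=
    fun i => IsDemand.marginal_le_of_nash (v := v) hXd hp hnash
  refine ⟨fun i hi => ?_, ?_⟩
  · linarith [h_marginal_le i hi, hmono _ _ (subset_insert i (X p))]
  · have := le_of_forall_insert_le hsub h_marginal_le univ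
    rw [union_eq_right.mpr (subset_univ _)] at this
    linarith [hmono _ _ (subset_univ (X p))]

/-- For monotone submodular `v` with `v ∅ = 0` and a pure Nash
equilibrium `p` with `S = X p`: every `i ∉ S` has zero marginal value with
respect to `S`, hence `v S = v N`. -/
theorem stmt7 {n : ℕ} (v : Finset (Fin n) → ℝ)
    (hmono : ∀ S T : Finset (Fin n), S ⊆ T → v S ≤ v T)
    (hsub : ∀ S T : Finset (Fin n), v (S ∪ T) + v (S ∩ T) ≤ v S + v T)
    (hv0 : v ∅ = 0)
    (X : (Fin n → ℝ) → Finset (Fin n))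
    (hXd : ∀ q : Fin n → ℝ, (∀ i, 0 ≤ q i) → ∀ T : Finset (Fin n),
      v T - ∑ i ∈ T, q i ≤ v (X q) - ∑ i ∈ X q, q i)
    (p : Fin n → ℝ) (hp : ∀ i, 0 ≤ p i)
    (hnash : ∀ i : Fin n, ∀ q : ℝ, 0 ≤ q →
      (if i ∈ X (Function.update p i q) then q else 0) ≤
      (if i ∈ X p then p i else 0)) :
    (∀ i : Fin n, i ∉ X p → v (insert i (X p)) - v (X p) = 0) ∧
      v (X p) = v Finset.univ :=
  stmt7_general v hmono hsub X hXd p hp hnash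
end

section
/- There exists a monotone XOS (hence subadditive) valuation on 3 items for which pure Nash equilibrium utilities are not unique: for v with v(∅)=0, v(S)=2 for 1 ≤ |S| ≤ 2, v(S)=3 for |S|=3, every price vector of the form (x, x, 1-x) with 0 ≤ x ≤ 1/2 (and the buyer purchasing all three items) is a pure Nash equilibrium of the pricing game. -/
/-! At `p = (x, x, 1 - x)` the buyer's utility is at most `2 - x`: a set of one or two items
is worth `2` and costs at least `x`, the whole set is worth `3` and costs `1 + x`. The whole set
attains this maximum, so a maximal decision map buys everything; and for every item `i` some
single item `j ≠ i` priced `x` attains it as well. A seller `i` who raises its price to `q` and is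
still bought therefore gains nothing: the buyer could switch to `{j}`, whose utility is unchanged,
so `q ≤ p i`. -/

open Finset Function

section PricingGame

variable {ι : Type*} [DecidableEq ι] (v : Finset ι → ℝ)

def buyerUtility (p : ι → ℝ) (S : Finset ι) : ℝ := v S - ∑ i ∈ S, p i

variable {v}

theorem buyerUtility_update_of_notMem {p : ι → ℝ} {i : ι} {T : Finset ι} (q : ℝ) (hiT : i ∉ T) :
    buyerUtility v (update p i q) T = buyerUtility v p T := by
  unfold buyerUtility
  rw [sum_update_of_notMem hiT]

theorem buyerUtility_update_of_mem {p : ι → ℝ} {i : ι} {S : Finset ι} (q : ℝ) (hiS : i ∈ S) :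
    buyerUtility v (update p i q) S = buyerUtility v p S + p i - q := by
  unfold buyerUtility
  rw [sum_update_of_mem hiS, sdiff_singleton_eq_erase, ← add_sum_erase S p hiS]
  ring

theorem le_of_mem_of_optimal_notMem {p : ι → ℝ} {i : ι} {q : ℝ} {S T : Finset ι}
    (hiS : i ∈ S) (hiT : i ∉ T)
    (hS : buyerUtility v (update p i q) T ≤ buyerUtility v (update p i q) S)
    (hT : ∀ U, buyerUtility v p U ≤ buyerUtility v p T) : q ≤ p i := by
  rw [buyerUtility_update_of_notMem q hiT, buyerUtility_update_of_mem q hiS] at hS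
  linarith [hT S]

theorem seller_payoff_update_le {X : (ι → ℝ) → Finset ι}
    (hXd : ∀ q : ι → ℝ, (∀ i, 0 ≤ q i) → ∀ T, buyerUtility v q T ≤ buyerUtility v q (X q))
    {p : ι → ℝ} (hp : ∀ j, 0 ≤ p j) {i : ι} (hiXp : i ∈ X p)
    (hT : ∃ T, i ∉ T ∧ ∀ U, buyerUtility v p U ≤ buyerUtility v p T) {q : ℝ} (hq : 0 ≤ q) :
    (if i ∈ X (update p i q) then q else 0) ≤ (if i ∈ X p then p i else 0) := by
  rw [if_pos hiXp]
  split_ifs with hi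
  · obtain ⟨T, hiT, hTmax⟩ := hT
    have hp' : 0 ≤ update p i q := le_update_iff.mpr ⟨hq, fun j _ => hp j⟩
    exact le_of_mem_of_optimal_notMem hi hiT (hXd _ hp' T) hTmax
  · exact hp i

end PricingGame

section ThreeItems

def threeItemValuation (S : Finset (Fin 3)) : ℝ :=
  if S = ∅ then 0 else if S.card ≤ 2 then 2 else 3

variable {x : ℝ}

theorem le_threeItemPrice (hx : x ≤ 1/2) (j : Fin 3) : x ≤ ![x, x, 1-x] j := by
  fin_cases j <;> simp
  linarith

theorem buyerUtility_threeItem_univ :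
    buyerUtility threeItemValuation ![x, x, 1-x] univ = 2 - x := by
  simp [buyerUtility, threeItemValuation, Fin.sum_univ_three, univ_eq_empty_iff]
  ring

theorem buyerUtility_threeItem_le (hx0 : 0 ≤ x) (hx : x ≤ 1/2) (U : Finset (Fin 3)) :
    buyerUtility threeItemValuation ![x, x, 1-x] U ≤ 2 - x := by
  rcases U.eq_empty_or_nonempty with rfl | ⟨j, hj⟩
  · simp [buyerUtility, threeItemValuation]
    linarith
  by_cases hU : U = univ
  · rw [hU, buyerUtility_threeItem_univ]
  have hcard : U.card ≤ 2 := by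
    simpa [Nat.lt_succ_iff] using (card_lt_iff_ne_univ U).mpr hU
  have hprice : x ≤ ∑ k ∈ U, ![x, x, 1-x] k :=
    (le_threeItemPrice hx j).trans
      (single_le_sum (fun k _ => hx0.trans (le_threeItemPrice hx k)) hj)
  simp only [buyerUtility, threeItemValuation, if_neg (ne_empty_of_mem hj), if_pos hcard]
  linarith

theorem exists_optimal_notMem_threeItem (hx0 : 0 ≤ x) (hx : x ≤ 1/2) (i : Fin 3) :
    ∃ T, i ∉ T ∧ ∀ U, buyerUtility threeItemValuation ![x, x, 1-x] U ≤
      buyerUtility threeItemValuation ![x, x, 1-x] T := by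
  obtain ⟨j, hji, hj⟩ : ∃ j : Fin 3, j ≠ i ∧ ![x, x, 1-x] j = x := by
    fin_cases i
    exacts [⟨1, by decide, rfl⟩, ⟨0, by decide, rfl⟩, ⟨0, by decide, rfl⟩]
  refine ⟨{j}, by simpa using hji.symm, fun U => ?_⟩
  have hsingle : buyerUtility threeItemValuation ![x, x, 1-x] {j} = 2 - x := by
    simp [buyerUtility, threeItemValuation, hj]
  rw [hsingle]
  exact buyerUtility_threeItem_le hx0 hx U

end ThreeItems

/-- Non-uniqueness of equilibrium utilities for an XOS valuation on
three items: for `v(∅)=0`, `v(S)=2` for `1 ≤ |S| ≤ 2`, `v(S)=3` for `|S|=3`,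
every price vector `(x, x, 1-x)` with `0 ≤ x ≤ 1/2` is a pure Nash equilibrium
in which the buyer (using a maximal demand-consistent decision map) purchases
all three items. -/
theorem stmt9 (v : Finset (Fin 3) → ℝ)
    (hv : ∀ S : Finset (Fin 3), v S = if S = ∅ then 0 else if S.card ≤ 2 then 2 else 3)
    (X : (Fin 3 → ℝ) → Finset (Fin 3))
    (hXd : ∀ q : Fin 3 → ℝ, (∀ i, 0 ≤ q i) → ∀ T : Finset (Fin 3),
      v T - ∑ i ∈ T, q i ≤ v (X q) - ∑ i ∈ X q, q i)
    (hXmax : ∀ q : Fin 3 → ℝ, (∀ i, 0 ≤ q i) → ∀ T : Finset (Fin 3),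
      (∀ U : Finset (Fin 3), v U - ∑ i ∈ U, q i ≤ v T - ∑ i ∈ T, q i) →
      ¬ X q ⊂ T)
    (x : ℝ) (hx0 : 0 ≤ x) (hx : x ≤ 1/2) :
    X ![x, x, 1-x] = Finset.univ ∧
    (∀ i : Fin 3, ∀ q : ℝ, 0 ≤ q →
      (if i ∈ X (Function.update ![x, x, 1-x] i q) then q else 0) ≤
      (if i ∈ X ![x, x, 1-x] then ![x, x, 1-x] i else 0)) := by
  obtain rfl : v = threeItemValuation := funext hv
  have hp : ∀ j, 0 ≤ ![x, x, 1-x] j := fun j => hx0.trans (le_threeItemPrice hx j)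
  have huniv : ∀ U, buyerUtility threeItemValuation ![x, x, 1-x] U ≤
      buyerUtility threeItemValuation ![x, x, 1-x] univ := fun U => by
    rw [buyerUtility_threeItem_univ]
    exact buyerUtility_threeItem_le hx0 hx U
  have hXp : X ![x, x, 1-x] = univ := by
    simpa [ssubset_univ_iff] using hXmax _ hp univ huniv
  exact ⟨hXp, fun i q hq => seller_payoff_update_le hXd hp (hXp ▸ mem_univ i)
    (exists_optimal_notMem_threeItem hx0 hx i) hq⟩
end

section
/- The decision map that selects the lexicographically first set among the maximal sets of the demand correspondence D(v;p) = argmax_S (v(S) - p(S)) is up-consistent: if X(p) = S, i ∈ S, and p'_i > p_i, then either X(p'_i, p_{-i}) = S or i ∉ X(p'_i, p_{-i}). -/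
/-!
If `i` lies in both `X p` and `X p'`, where `p'` only raises the price of `i`, then passing
from `p` to `p'` lowers the payoff of every bundle containing `i` by the same amount
`p'ᵢ - pᵢ`. Since the maxima at both prices are attained at bundles containing `i`, a bundle
containing `i` is demanded at `p` iff it is demanded at `p'`; as every superset of such a bundle
also contains `i`, the same holds for maximal demanded bundles. So `X p` and `X p'` are maximal
demanded at both prices, each comes first in the order `e` among them, and injectivity of `e`
forces `X p = X p'`.
-/

open Finset

section Argmax

variable {ι β : Type*}

def IsArgmax [LE β] (f : ι → β) (x : ι) : Prop := ∀ y, f y ≤ f x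

lemma IsArgmax.isArgmax_iff_le [Preorder β] {f : ι → β} {a : ι} (ha : IsArgmax f a) {x : ι} :
    IsArgmax f x ↔ f a ≤ f x :=
  ⟨fun hx => hx a, fun hax y => (ha y).trans hax⟩

lemma isArgmax_iff_of_eq_add_on [AddCommGroup β] [PartialOrder β] [IsOrderedAddMonoid β]
    {P : ι → Prop} {f g : ι → β} {c : β}
    (hfg : ∀ x, P x → g x = f x + c) {a b : ι} (ha : P a) (hb : P b)
    (hfa : IsArgmax f a) (hgb : IsArgmax g b) {x : ι} (hx : P x) :
    IsArgmax f x ↔ IsArgmax g x := by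
  have hab : f a ≤ f b := by
    simpa only [hfg a ha, hfg b hb, add_le_add_iff_right] using hgb a
  rw [hfa.isArgmax_iff_le, hgb.isArgmax_iff_le, hfg b hb, hfg x hx, add_le_add_iff_right]
  exact ⟨(hfa b).trans, hab.trans⟩

end Argmax

lemma maximal_congr_on_upwardClosed {α : Type*} [Preorder α] {P Q R : α → Prop}
    (hP : ∀ ⦃x y⦄, P x → x ≤ y → P y) (hQR : ∀ x, P x → (Q x ↔ R x)) {x : α} (hx : P x) :
    Maximal Q x ↔ Maximal R x := by
  simp only [maximal_iff_forall_gt, hQR x hx]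
  exact and_congr_right fun _ => forall_congr' fun y => imp_congr_right fun hxy =>
    not_congr (hQR y (hP hx hxy.le))

section Demand

variable {α : Type*} [DecidableEq α]

def payoff (v : Finset α → ℝ) (p : α → ℝ) (T : Finset α) : ℝ := v T - ∑ j ∈ T, p j

lemma payoff_update_of_mem (v : Finset α → ℝ) (p : α → ℝ) {i : α} (q : ℝ) {T : Finset α}
    (hi : i ∈ T) : payoff v (Function.update p i q) T = payoff v p T + (p i - q) := by
  rw [payoff, payoff, sum_update_of_mem hi, sdiff_singleton_eq_erase,
    ← add_sum_erase T p hi]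
  ring

lemma maximal_isArgmax_payoff_update_iff (v : Finset α → ℝ) (p : α → ℝ) {i : α} (q : ℝ)
    {A B : Finset α} (hA : i ∈ A) (hB : i ∈ B) (hpA : IsArgmax (payoff v p) A)
    (hqB : IsArgmax (payoff v (Function.update p i q)) B) ⦃T : Finset α⦄ (hT : i ∈ T) :
    Maximal (IsArgmax (payoff v p)) T ↔
      Maximal (IsArgmax (payoff v (Function.update p i q))) T :=
  maximal_congr_on_upwardClosed (P := (i ∈ ·)) (fun _ _ hx hxy => mem_of_subset hxy hx)
    (fun _ => isArgmax_iff_of_eq_add_on (P := (i ∈ ·)) (fun _ => payoff_update_of_mem v p q)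
      hA hB hpA hqB) hT

end Demand

theorem stmt12_general {n : ℕ} (v : Finset (Fin n) → ℝ)
    (e : Finset (Fin n) → ℕ) (he : Function.Injective e)
    (X : (Fin n → ℝ) → Finset (Fin n))
    (hXd : ∀ q : Fin n → ℝ, ∀ T : Finset (Fin n),
      v T - ∑ i ∈ T, q i ≤ v (X q) - ∑ i ∈ X q, q i)
    (hXmax : ∀ q : Fin n → ℝ, ∀ T : Finset (Fin n),
      (∀ U : Finset (Fin n), v U - ∑ i ∈ U, q i ≤ v T - ∑ i ∈ T, q i) →
      ¬ X q ⊂ T)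
    (hXfirst : ∀ q : Fin n → ℝ, ∀ T : Finset (Fin n),
      (∀ U : Finset (Fin n), v U - ∑ i ∈ U, q i ≤ v T - ∑ i ∈ T, q i) →
      (∀ U : Finset (Fin n),
        (∀ W : Finset (Fin n), v W - ∑ i ∈ W, q i ≤ v U - ∑ i ∈ U, q i) →
        ¬ T ⊂ U) →
      e (X q) ≤ e T) :
    ∀ p : Fin n → ℝ, ∀ i : Fin n, i ∈ X p → ∀ q : ℝ, p i < q →
      X (Function.update p i q) = X p ∨ i ∉ X (Function.update p i q) := by
  intro p i hi q _
  refine (em (i ∈ X (Function.update p i q))).elim (fun hi' => .inl ?_) .inr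
  have hX : ∀ r, Maximal (IsArgmax (payoff v r)) (X r) := fun r =>
    maximal_iff_forall_gt.2 ⟨hXd r, fun U hlt hU => hXmax r U hU hlt⟩
  have hfirst : ∀ r T, Maximal (IsArgmax (payoff v r)) T → e (X r) ≤ e T := fun r T hT =>
    hXfirst r T hT.prop fun _ hU hlt => hT.not_gt hU hlt
  have hiff := maximal_isArgmax_payoff_update_iff v p q hi hi' (hX p).prop
    (hX (Function.update p i q)).prop
  exact he <| le_antisymm (hfirst _ _ ((hiff hi).1 (hX p)))
    (hfirst _ _ ((hiff hi').2 (hX _)))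

/-- The decision map selecting the first set (with respect to a
fixed linear order on subsets, encoded by an injection `e` into ℕ) among the
maximal sets of the demand correspondence is up-consistent: if `X p = S`,
`i ∈ S` and `p'_i > p_i`, then either `X (p'_i, p_{-i}) = S` or
`i ∉ X (p'_i, p_{-i})`. -/
theorem stmt12 {n : ℕ} (v : Finset (Fin n) → ℝ)
    (hmono : ∀ S T : Finset (Fin n), S ⊆ T → v S ≤ v T)
    (e : Finset (Fin n) → ℕ) (he : Function.Injective e)
    (X : (Fin n → ℝ) → Finset (Fin n))
    (hXd : ∀ q : Fin n → ℝ, ∀ T : Finset (Fin n),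
      v T - ∑ i ∈ T, q i ≤ v (X q) - ∑ i ∈ X q, q i)
    (hXmax : ∀ q : Fin n → ℝ, ∀ T : Finset (Fin n),
      (∀ U : Finset (Fin n), v U - ∑ i ∈ U, q i ≤ v T - ∑ i ∈ T, q i) →
      ¬ X q ⊂ T)
    (hXfirst : ∀ q : Fin n → ℝ, ∀ T : Finset (Fin n),
      (∀ U : Finset (Fin n), v U - ∑ i ∈ U, q i ≤ v T - ∑ i ∈ T, q i) →
      (∀ U : Finset (Fin n),
        (∀ W : Finset (Fin n), v W - ∑ i ∈ W, q i ≤ v U - ∑ i ∈ U, q i) →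
        ¬ T ⊂ U) →
      e (X q) ≤ e T) :
    ∀ p : Fin n → ℝ, ∀ i : Fin n, i ∈ X p → ∀ q : ℝ, p i < q →
      X (Function.update p i q) = X p ∨ i ∉ X (Function.update p i q) :=
  stmt12_general v e he X hXd hXmax hXfirst
end

section
/- Let p be a pure Nash equilibrium of the pricing game with costs and let S = X(p). Then (1) v(S) - v(S\{i}) ≥ c_i for all i ∈ S, and (2) v(T∪{j}) + c(S\T) - c_j ≤ v(S) for all T ⊆ S and j ∉ S. Consequently v(S) - c(S) ≥ max over: v(S\{i}) - c(S\{i}), v(S∪{j}) - c(S∪{j}), and v(S∪{j}\{i}) - c(S∪{j}\{i}) for all i ∈ S, j ∉ S (i.e., S is a local optimum of v - c under single additions, deletions, and swaps). -/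
/-!
A selected seller never prices below cost (pricing at cost is a safe deviation), and never above
its marginal value `v S - v (S \ {i})`, since the buyer could drop it; this gives (1).
For (2), suppose `v (T ∪ {j}) + c (S \ T) - c j > v S`. Then the unselected seller `j` can post a
price strictly between `c j` and `v (T ∪ {j}) + p (S \ T) - v S`: every bundle avoiding `j` is
at most as good for the buyer as `S` was, while `T ∪ {j}` is strictly better, so the buyer now
takes `j` and `j` earns a positive profit, contradicting equilibrium.
The local-optimality inequalities are (1) and the instances `T = S`, `T = S \ {i}` of (2).
-/

open Finset Function

namespace PricingGame

variable {α : Type*}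

def IsUtilityMax (v : Finset α → ℝ) (q : α → ℝ) (S : Finset α) : Prop :=
  ∀ T : Finset α, v T - ∑ i ∈ T, q i ≤ v S - ∑ i ∈ S, q i

variable [DecidableEq α]

lemma IsUtilityMax.le_sub_erase {v : Finset α → ℝ} {q : α → ℝ} {S : Finset α}
    (hS : IsUtilityMax v q S) {i : α} (hi : i ∈ S) : q i ≤ v S - v (S.erase i) := by
  have h := hS (S.erase i)
  have hsum := sum_erase_add S q hi
  linarith

lemma mem_of_isUtilityMax_update {v : Finset α → ℝ} {p : α → ℝ} {S S' T : Finset α} {j : α}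
    {t : ℝ} (hS : IsUtilityMax v p S) (hS' : IsUtilityMax v (update p j t) S') (hT : T ⊆ S)
    (hj : j ∉ S) (ht : t < v (insert j T) + ∑ i ∈ S \ T, p i - v S) : j ∈ S' := by
  by_contra hjS'
  have hjT : j ∉ T := fun h => hj (hT h)
  have hnew := hS' (insert j T)
  rw [sum_insert hjT, update_self, sum_update_of_notMem hjT,
    sum_update_of_notMem hjS'] at hnew
  have hold := hS S'
  have hsplit := sum_sdiff (f := p) hT
  linarith

section Nash

variable {v : Finset α → ℝ} {c p : α → ℝ} {X : (α → ℝ) → Finset α}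

def NoProfitableDeviation (c : α → ℝ) (X : (α → ℝ) → Finset α) (p : α → ℝ) (i : α) : Prop :=
  ∀ q : ℝ, 0 ≤ q →
    (if i ∈ X (update p i q) then q - c i else 0) ≤ (if i ∈ X p then p i - c i else 0)

lemma NoProfitableDeviation.cost_le_price {i : α} (hnash : NoProfitableDeviation c X p i)
    (hc : 0 ≤ c i) (hi : i ∈ X p) : c i ≤ p i := by
  have h := hnash (c i) hc
  rw [if_pos hi] at h
  split_ifs at h <;> linarith

lemma cost_le_marginal_value (hXp : IsUtilityMax v p (X p))
    {i : α} (hnash : NoProfitableDeviation c X p i) (hc : 0 ≤ c i) (hi : i ∈ X p) :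
    c i ≤ v (X p) - v ((X p).erase i) :=
  (hnash.cost_le_price hc hi).trans (hXp.le_sub_erase hi)

lemma value_insert_add_cost_sdiff_le (hX : ∀ q : α → ℝ, (∀ i, 0 ≤ q i) → IsUtilityMax v q (X q))
    (hp : ∀ i, 0 ≤ p i) (hc : ∀ i, 0 ≤ c i) (hnash : ∀ i, NoProfitableDeviation c X p i)
    {T : Finset α} (hT : T ⊆ X p) {j : α} (hj : j ∉ X p) :
    v (insert j T) + ∑ i ∈ X p \ T, c i - c j ≤ v (X p) := by
  by_contra! hgain
  obtain ⟨t, hct, htgain⟩ :=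
    exists_between (show c j < v (insert j T) + ∑ i ∈ X p \ T, c i - v (X p) by linarith)
  have hcost : ∑ i ∈ X p \ T, c i ≤ ∑ i ∈ X p \ T, p i :=
    sum_le_sum fun i hi => (hnash i).cost_le_price (hc i) (mem_sdiff.mp hi).1
  have ht : 0 ≤ t := (hc j).trans hct.le
  have hp' : ∀ i, 0 ≤ update p j t i :=
    (forall_update_iff p fun _ z => 0 ≤ z).2 ⟨ht, fun i _ => hp i⟩
  have hjsel : j ∈ X (update p j t) :=
    mem_of_isUtilityMax_update (hX p hp) (hX _ hp') hT hj (by linarith)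
  have h := hnash j t ht
  rw [if_pos hjsel, if_neg hj] at h
  linarith

end Nash

lemma sub_sum_insert_le_of_le {v : Finset α → ℝ} {c : α → ℝ} {S T : Finset α} {j : α}
    (hT : T ⊆ S) (hj : j ∉ S) (h : v (insert j T) + ∑ i ∈ S \ T, c i - c j ≤ v S) :
    v (insert j T) - ∑ k ∈ insert j T, c k ≤ v S - ∑ k ∈ S, c k := by
  have hsplit := sum_sdiff (f := c) hT
  rw [sum_insert fun h => hj (hT h)]
  linarith

lemma sub_sum_erase_le_of_le {v : Finset α → ℝ} {c : α → ℝ} {S : Finset α} {i : α}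
    (hi : i ∈ S) (h : c i ≤ v S - v (S.erase i)) :
    v (S.erase i) - ∑ k ∈ S.erase i, c k ≤ v S - ∑ k ∈ S, c k := by
  have hsum := sum_erase_add S c hi
  linarith

end PricingGame

open PricingGame in
theorem stmt14_general {n : ℕ} (v : Finset (Fin n) → ℝ)
    (c : Fin n → ℝ) (hc : ∀ i, 0 ≤ c i)
    (X : (Fin n → ℝ) → Finset (Fin n))
    (hXd : ∀ q : Fin n → ℝ, (∀ i, 0 ≤ q i) → ∀ T : Finset (Fin n),
      v T - ∑ i ∈ T, q i ≤ v (X q) - ∑ i ∈ X q, q i)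
    (p : Fin n → ℝ) (hp : ∀ i, 0 ≤ p i)
    (hnash : ∀ i : Fin n, ∀ q : ℝ, 0 ≤ q →
      (if i ∈ X (Function.update p i q) then q - c i else 0) ≤
      (if i ∈ X p then p i - c i else 0)) :
    (∀ i ∈ X p, c i ≤ v (X p) - v ((X p).erase i)) ∧
    (∀ T ⊆ X p, ∀ j ∉ X p,
      v (insert j T) + ∑ i ∈ X p \ T, c i - c j ≤ v (X p)) ∧
    (∀ i ∈ X p, ∀ j ∉ X p,
      (v ((X p).erase i) - ∑ k ∈ (X p).erase i, c k ≤ v (X p) - ∑ k ∈ X p, c k) ∧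
      (v (insert j (X p)) - ∑ k ∈ insert j (X p), c k ≤ v (X p) - ∑ k ∈ X p, c k) ∧
      (v (insert j ((X p).erase i)) - ∑ k ∈ insert j ((X p).erase i), c k ≤
        v (X p) - ∑ k ∈ X p, c k)) := by
  have marginal : ∀ i ∈ X p, c i ≤ v (X p) - v ((X p).erase i) := fun i hi =>
    cost_le_marginal_value (hXd p hp) (hnash i) (hc i) hi
  have entry : ∀ T ⊆ X p, ∀ j ∉ X p,
      v (insert j T) + ∑ i ∈ X p \ T, c i - c j ≤ v (X p) := fun T hT j hj =>
    value_insert_add_cost_sdiff_le hXd hp hc hnash hT hj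
  refine ⟨marginal, entry, fun i hi j hj => ⟨?_, ?_, ?_⟩⟩
  · exact sub_sum_erase_le_of_le hi (marginal i hi)
  · exact sub_sum_insert_le_of_le subset_rfl hj (entry _ subset_rfl j hj)
  · exact sub_sum_insert_le_of_le (erase_subset i _) hj (entry _ (erase_subset i _) j hj)

/-- Characterization of pure Nash equilibria of the pricing game
with costs: with `S = X p`, (1) `v(S) - v(S\{i}) ≥ c_i` for all `i ∈ S`,
(2) `v(T ∪ {j}) + c(S \ T) - c_j ≤ v(S)` for all `T ⊆ S` and `j ∉ S`, and
consequently `S` is a local optimum of `v - c` under single deletions,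
additions and swaps. -/
theorem stmt14 {n : ℕ} (v : Finset (Fin n) → ℝ)
    (hmono : ∀ S T : Finset (Fin n), S ⊆ T → v S ≤ v T)
    (hv0 : v ∅ = 0)
    (c : Fin n → ℝ) (hc : ∀ i, 0 ≤ c i)
    (X : (Fin n → ℝ) → Finset (Fin n))
    (hXd : ∀ q : Fin n → ℝ, (∀ i, 0 ≤ q i) → ∀ T : Finset (Fin n),
      v T - ∑ i ∈ T, q i ≤ v (X q) - ∑ i ∈ X q, q i)
    (p : Fin n → ℝ) (hp : ∀ i, 0 ≤ p i)
    (hnash : ∀ i : Fin n, ∀ q : ℝ, 0 ≤ q →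
      (if i ∈ X (Function.update p i q) then q - c i else 0) ≤
      (if i ∈ X p then p i - c i else 0)) :
    (∀ i ∈ X p, c i ≤ v (X p) - v ((X p).erase i)) ∧
    (∀ T ⊆ X p, ∀ j ∉ X p,
      v (insert j T) + ∑ i ∈ X p \ T, c i - c j ≤ v (X p)) ∧
    (∀ i ∈ X p, ∀ j ∉ X p,
      (v ((X p).erase i) - ∑ k ∈ (X p).erase i, c k ≤ v (X p) - ∑ k ∈ X p, c k) ∧
      (v (insert j (X p)) - ∑ k ∈ insert j (X p), c k ≤ v (X p) - ∑ k ∈ X p, c k) ∧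
      (v (insert j ((X p).erase i)) - ∑ k ∈ insert j ((X p).erase i), c k ≤
        v (X p) - ∑ k ∈ X p, c k)) :=
  stmt14_general v c hc X hXd p hp hnash
end

section
/- Let v : 2^N → ℝ≥0 with |N| = n and v(∅)=0. Sample a set S as follows: first pick k ∈ {1,…,n} with probability 1/(k·H_n) where H_n = Σ_{j=1}^n 1/j, then pick S uniformly at random among subsets of size k. Then E[ Σ_{i∈S} (v(S) - v(S\{i})) ] = v(N)/H_n. -/
/-!
Among the sets of size `k + 1`, each `S` is counted `k + 1` times in `∑ v S` and each set `T` of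
size `k` is counted `n - k` times in `∑ v (S \ {i})`, once for every `i ∉ T`. Since
`(k + 1) C(n, k + 1) = (n - k) C(n, k)`, the expectation conditioned on `|S| = k + 1` is
`(k + 1) (ṽ(k + 1) - ṽ(k))`, where `ṽ(k)` is the mean of `v` over the sets of size `k`. The weight
`1 / ((k + 1) H_n)` cancels the factor `k + 1`, so the sum telescopes to
`(ṽ(n) - ṽ(0)) / H_n = v(N) / H_n`.
-/

open Finset

theorem Finset.sum_powersetCard_succ_sum_erase {α M : Type*} [DecidableEq α] [AddCommMonoid M]
    (s : Finset α) (k : ℕ) (f : Finset α → M) :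
    ∑ S ∈ s.powersetCard (k + 1), ∑ i ∈ S, f (S.erase i) =
      (#s - k) • ∑ T ∈ s.powersetCard k, f T := by
  calc ∑ S ∈ s.powersetCard (k + 1), ∑ i ∈ S, f (S.erase i)
      = ∑ T ∈ s.powersetCard k, ∑ i ∈ s \ T, f T := by
        rw [sum_sigma', sum_sigma']
        refine sum_bij' (fun p _ => ⟨p.1.erase p.2, p.2⟩) (fun p _ => ⟨insert p.2 p.1, p.2⟩)
          ?_ ?_ ?_ ?_ (fun _ _ => rfl)
        all_goals
          rintro ⟨S, i⟩ h
          simp only [mem_sigma, mem_powersetCard, mem_sdiff] at h ⊢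
        · exact ⟨⟨(erase_subset i S).trans h.1.1, by rw [card_erase_of_mem h.2, h.1.2]; rfl⟩,
            h.1.1 h.2, notMem_erase i S⟩
        · exact ⟨⟨insert_subset h.2.1 h.1.1, by rw [card_insert_of_notMem h.2.2, h.1.2]⟩,
            mem_insert_self i S⟩
        · rw [insert_erase h.2]
        · rw [erase_insert h.2.2]
    _ = (#s - k) • ∑ T ∈ s.powersetCard k, f T := by
        rw [smul_sum]
        refine sum_congr rfl fun T hT => ?_
        rw [sum_const, card_sdiff_of_subset (mem_powersetCard.1 hT).1, (mem_powersetCard.1 hT).2]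

section SizeAverage

variable {α : Type*} [Fintype α]

noncomputable def sizeAverage (v : Finset α → ℝ) (k : ℕ) : ℝ :=
  (∑ S ∈ powersetCard k univ, v S) / (Fintype.card α).choose k

theorem sizeAverage_zero (v : Finset α → ℝ) : sizeAverage v 0 = v ∅ := by
  simp [sizeAverage]

theorem sizeAverage_card (v : Finset α → ℝ) : sizeAverage v (Fintype.card α) = v univ := by
  simp [sizeAverage, ← card_univ, powersetCard_self]

theorem sum_powersetCard_succ_sum_sub_erase_div_choose [DecidableEq α] (v : Finset α → ℝ) {k : ℕ}
    (hk : k < Fintype.card α) :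
    (∑ S ∈ powersetCard (k + 1) univ, ∑ i ∈ S, (v S - v (S.erase i))) /
        (Fintype.card α).choose (k + 1) =
      (k + 1) * (sizeAverage v (k + 1) - sizeAverage v k) := by
  unfold sizeAverage
  set n := Fintype.card α
  have hsum : ∑ S ∈ powersetCard (k + 1) univ, ∑ i ∈ S, (v S - v (S.erase i)) =
      (k + 1) * ∑ S ∈ powersetCard (k + 1) univ, v S -
        ((n - k : ℕ) : ℝ) * ∑ T ∈ powersetCard k univ, v T := by
    simp_rw [sum_sub_distrib, sum_powersetCard_succ_sum_erase, card_univ, nsmul_eq_mul, mul_sum]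
    refine congrArg (· - _) (sum_congr rfl fun S hS => ?_)
    rw [sum_const, (mem_powersetCard.1 hS).2, nsmul_eq_mul]
    push_cast
    ring
  have hchoose : ((n.choose (k + 1) : ℕ) : ℝ) * (k + 1) = n.choose k * ((n - k : ℕ) : ℝ) := by
    exact_mod_cast Nat.choose_succ_right_eq n k
  have hC₀ : (n.choose k : ℝ) ≠ 0 := by exact_mod_cast (Nat.choose_pos hk.le).ne'
  have hC₁ : (n.choose (k + 1) : ℝ) ≠ 0 := by exact_mod_cast (Nat.choose_pos hk).ne'
  rw [hsum]
  field_simp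
  linear_combination (∑ T ∈ powersetCard k univ, v T) * hchoose

end SizeAverage

theorem stmt17_general {n : ℕ} (v : Finset (Fin n) → ℝ) (hv0 : v ∅ = 0) :
    ∑ k ∈ Finset.Icc 1 n,
      (1 / ((k : ℝ) * ∑ j ∈ Finset.Icc 1 n, (1 : ℝ) / j)) *
        ((∑ S ∈ (Finset.univ : Finset (Fin n)).powerset.filter
            (fun S => S.card = k),
          ∑ i ∈ S, (v S - v (S.erase i))) / (n.choose k : ℝ)) =
      v Finset.univ / (∑ j ∈ Finset.Icc 1 n, (1 : ℝ) / j) := by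
  set H := ∑ j ∈ Icc 1 n, (1 : ℝ) / j
  have hterm : ∀ k ∈ range n,
      1 / (((k + 1 : ℕ) : ℝ) * H) *
        ((∑ S ∈ univ.powerset.filter (fun S : Finset (Fin n) => #S = k + 1),
          ∑ i ∈ S, (v S - v (S.erase i))) / (n.choose (k + 1) : ℝ)) =
      (sizeAverage v (k + 1) - sizeAverage v k) / H := by
    intro k hk
    have hk : k < Fintype.card (Fin n) := by simpa using hk
    have hmarginal := sum_powersetCard_succ_sum_sub_erase_div_choose v hk
    rw [Fintype.card_fin] at hmarginal
    rw [← powersetCard_eq_filter, hmarginal]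
    push_cast
    field_simp
  have hIcc : Icc 1 n = (range n).map (addRightEmbedding 1) := by
    rw [range_eq_Ico, map_add_right_Ico]
    rfl
  have hcard : sizeAverage v n = v univ := by simpa using sizeAverage_card v
  rw [hIcc, sum_map]
  simp only [addRightEmbedding_apply]
  rw [sum_congr rfl hterm, ← sum_div, sum_range_sub, hcard, sizeAverage_zero, hv0,
    sub_zero]

/-- Sampling lemma: picking a size `k ∈ {1,…,n}` with probability
`1/(k·H_n)` and then a uniformly random set `S` of size `k`, the expectation of
`∑_{i∈S} (v S - v (S\{i}))` equals `v(N)/H_n`. -/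
theorem stmt17 {n : ℕ} (hn : 1 ≤ n) (v : Finset (Fin n) → ℝ) (hv0 : v ∅ = 0) :
    ∑ k ∈ Finset.Icc 1 n,
      (1 / ((k : ℝ) * ∑ j ∈ Finset.Icc 1 n, (1 : ℝ) / j)) *
        ((∑ S ∈ (Finset.univ : Finset (Fin n)).powerset.filter
            (fun S => S.card = k),
          ∑ i ∈ S, (v S - v (S.erase i))) / (n.choose k : ℝ)) =
      v Finset.univ / (∑ j ∈ Finset.Icc 1 n, (1 : ℝ) / j) :=
  stmt17_general v hv0
end

section
/- For monotone submodular v with v(∅)=0 and maximal decision map X, every optimal price vector p of the monopolistic seller (maximizing u(p)=Σ_{j∈X(p)}p_j) satisfies v(X(p)) ≥ v(N)/H_n, where H_n is the n-th harmonic number. Moreover this bound is tight up to constants: for v(S) = 1+ε if |S|=1 and v(S)=H_{|S|} if |S|≥2 (with 0<ε<small), every optimal price vector yields |X(p)| ≤ 1 and welfare at most 1+ε while v(N)=H_n. -/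
/-!
Posting the marginal prices `v S - v (S \ {i})` on a set `S` (and prohibitive prices elsewhere)
makes `S` a utility-maximizing bundle, by submodularity, so a maximal demand picks exactly `S`;
hence the optimal revenue `R` dominates `∑_{i ∈ S} (v S - v (S \ {i}))` for every `S`. Some
element of `S` therefore has marginal value at most `R / |S|`, and removing elements one at a
time gives `v N ≤ H_n R`. Finally `R ≤ v (X p)` because the buyer's utility at `X p` is
nonnegative.

For the tightness example, the marginal values of a bundle of size `k ≥ 2` sum to at most `1`,
while offering a single item at price `1 + ε` already earns `1 + ε`, so an optimal price vector
sells at most one item.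
-/

open Finset

lemma harmonic_monotone : Monotone harmonic :=
  monotone_nat_of_le_succ fun n => by
    rw [harmonic_succ, le_add_iff_nonneg_right]
    positivity

lemma harmonic_nonneg (n : ℕ) : 0 ≤ harmonic n :=
  harmonic_zero ▸ harmonic_monotone n.zero_le

lemma cast_harmonic_eq_sum_Icc (n : ℕ) : (harmonic n : ℝ) = ∑ j ∈ Icc 1 n, (1 : ℝ) / j := by
  simp [harmonic_eq_sum_Icc]

section Demand

variable {ι : Type*}

noncomputable def utility (v : Finset ι → ℝ) (q : ι → ℝ) (T : Finset ι) : ℝ :=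
  v T - ∑ i ∈ T, q i

structure IsMaximalDemand (v : Finset ι → ℝ) (X : (ι → ℝ) → Finset ι) : Prop where
  utility_le : ∀ q, 0 ≤ q → ∀ T, utility v q T ≤ utility v q (X q)
  not_ssubset : ∀ q, 0 ≤ q → ∀ T, (∀ U, utility v q U ≤ utility v q T) → ¬X q ⊂ T

noncomputable def revenue (X : (ι → ℝ) → Finset ι) (q : ι → ℝ) : ℝ :=
  ∑ j ∈ X q, q j

def IsOptimalPrice (X : (ι → ℝ) → Finset ι) (p : ι → ℝ) : Prop :=
  ∀ q, 0 ≤ q → revenue X q ≤ revenue X p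

variable {v : Finset ι → ℝ} {X : (ι → ℝ) → Finset ι}

lemma IsMaximalDemand.revenue_le_value (hX : IsMaximalDemand v X) (h0 : v ∅ = 0) {q : ι → ℝ}
    (hq : 0 ≤ q) : revenue X q ≤ v (X q) := by
  have := hX.utility_le q hq ∅
  simp only [utility, h0, sum_empty, sub_zero] at this
  rw [revenue]
  linarith

variable [DecidableEq ι]

def IsSubmodular (v : Finset ι → ℝ) : Prop :=
  ∀ S T, v (S ∪ T) + v (S ∩ T) ≤ v S + v T

noncomputable def marginal (v : Finset ι → ℝ) (S : Finset ι) (i : ι) : ℝ :=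
  v S - v (S.erase i)

lemma IsMaximalDemand.le_marginal (hX : IsMaximalDemand v X) {q : ι → ℝ} (hq : 0 ≤ q) {i : ι}
    (hi : i ∈ X q) : q i ≤ marginal v (X q) i := by
  have := hX.utility_le q hq ((X q).erase i)
  rw [utility, utility, ← add_sum_erase _ _ hi] at this
  rw [marginal]
  linarith

lemma piecewise_nonneg {S : Finset ι} {q : ι → ℝ} (hq : ∀ i ∈ S, 0 ≤ q i) {M : ℝ} (hM : 0 ≤ M) :
    0 ≤ S.piecewise q fun _ => M := fun i => by
  by_cases hi : i ∈ S
  · simpa [hi] using hq i hi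
  · simpa [hi] using hM

/-- The price `B + 1` exceeds every value, so a bundle not contained in `S` has negative
utility. -/
lemma IsMaximalDemand.demand_piecewise (hX : IsMaximalDemand v X) (h0 : v ∅ = 0) {B : ℝ}
    (hB : ∀ U, v U ≤ B) {S : Finset ι} {q : ι → ℝ} (hq : ∀ i ∈ S, 0 ≤ q i)
    (hS : ∀ T ⊆ S, utility v q T ≤ utility v q S) :
    X (S.piecewise q fun _ => B + 1) = S := by
  set q' := S.piecewise q fun _ => B + 1
  have hB0 : 0 ≤ B := h0 ▸ hB ∅
  have hq' : 0 ≤ q' := piecewise_nonneg hq (by linarith)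
  have hagree : ∀ T ⊆ S, utility v q' T = utility v q T := fun T hT => by
    simp only [utility]
    congr 1
    exact sum_congr rfl fun i hi => piecewise_eq_of_mem _ _ _ (hT hi)
  have hS0 : 0 ≤ utility v q S := by
    simpa [utility, h0] using hS ∅ (empty_subset _)
  have hout : ∀ U, ¬U ⊆ S → utility v q' U < utility v q' S := fun U hU => by
    obtain ⟨j, hjU, hjS⟩ := not_subset.mp hU
    have hj : q' j ≤ ∑ i ∈ U, q' i := single_le_sum (fun i _ => hq' i) hjU
    rw [show q' j = B + 1 from piecewise_eq_of_notMem _ _ _ hjS] at hj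
    rw [hagree S subset_rfl, utility]
    linarith [hB U]
  have hmax : ∀ U, utility v q' U ≤ utility v q' S := fun U => by
    by_cases hU : U ⊆ S
    · rw [hagree U hU, hagree S subset_rfl]; exact hS U hU
    · exact (hout U hU).le
  have hsub : X q' ⊆ S := by
    by_contra h
    exact (hout _ h).not_ge (hX.utility_le q' hq' S)
  exact hsub.ssubset_or_eq.resolve_left (hX.not_ssubset q' hq' S hmax)

lemma IsMaximalDemand.sum_le_revenue (hX : IsMaximalDemand v X) (h0 : v ∅ = 0)
    {B : ℝ} (hB : ∀ U, v U ≤ B) {S : Finset ι} {q : ι → ℝ} (hq : ∀ i ∈ S, 0 ≤ q i)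
    (hS : ∀ T ⊆ S, utility v q T ≤ utility v q S) {p : ι → ℝ} (hp : IsOptimalPrice X p) :
    ∑ i ∈ S, q i ≤ revenue X p := by
  have hrev := hp _ (piecewise_nonneg hq (M := B + 1) (by linarith [h0 ▸ hB ∅]))
  rw [revenue, hX.demand_piecewise h0 hB hq hS] at hrev
  exact (sum_congr rfl fun i hi => (piecewise_eq_of_mem _ _ _ hi).symm).trans_le hrev

lemma value_sdiff_add_sum_marginal_le (hsub : IsSubmodular v) {S D : Finset ι} (hD : D ⊆ S) :
    v (S \ D) + ∑ i ∈ D, marginal v S i ≤ v S := by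
  induction D using Finset.induction_on with
  | empty => simp
  | insert a D ha ih =>
    obtain ⟨haS, hDS⟩ := insert_subset_iff.mp hD
    have hunion : S \ D ∪ S.erase a = S := by
      ext x; simp only [mem_union, mem_sdiff, mem_erase]
      constructor
      · rintro (⟨hx, -⟩ | ⟨-, hx⟩) <;> exact hx
      · intro hx; by_cases hxa : x = a
        · exact Or.inl ⟨hx, hxa ▸ ha⟩
        · exact Or.inr ⟨hxa, hx⟩
    have hinter : S \ D ∩ S.erase a = S \ insert a D := by
      ext x; simp only [mem_inter, mem_sdiff, mem_erase, mem_insert]; tauto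
    have := hsub (S \ D) (S.erase a)
    rw [hunion, hinter] at this
    rw [sum_insert ha, marginal]
    linarith [ih hDS]

lemma utility_marginal_le (hsub : IsSubmodular v) {S T : Finset ι} (hT : T ⊆ S) :
    utility v (marginal v S) T ≤ utility v (marginal v S) S := by
  have := value_sdiff_add_sum_marginal_le hsub (sdiff_subset (s := S) (t := T))
  rw [Finset.sdiff_sdiff_eq_self hT] at this
  rw [utility, utility, ← sum_sdiff hT]
  linarith

lemma sum_marginal_le_revenue [Fintype ι] (hmono : Monotone v) (hsub : IsSubmodular v)
    (h0 : v ∅ = 0) (hX : IsMaximalDemand v X) {p : ι → ℝ} (hp : IsOptimalPrice X p)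
    (S : Finset ι) : ∑ i ∈ S, marginal v S i ≤ revenue X p := by
  have hmarg : ∀ i ∈ S, 0 ≤ marginal v S i := fun i _ =>
    sub_nonneg.mpr (hmono (S.erase_subset i))
  exact hX.sum_le_revenue h0 (fun U => hmono U.subset_univ) hmarg
    (fun T hT => utility_marginal_le hsub hT) hp

lemma le_harmonic_mul_of_sum_marginal_le (h0 : v ∅ = 0) {R : ℝ}
    (hR : ∀ S, ∑ i ∈ S, marginal v S i ≤ R) (S : Finset ι) : v S ≤ harmonic #S * R := by
  induction S using Finset.strongInduction with
  | H S ih =>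
    rcases S.eq_empty_or_nonempty with rfl | hne
    · simp [h0]
    have hcard : (0 : ℝ) < #S := by exact_mod_cast hne.card_pos
    obtain ⟨i, hi, hle⟩ := exists_le_of_sum_le hne
      (f := marginal v S) (g := fun _ => R / #S)
      (by rw [sum_const, nsmul_eq_mul, mul_div_cancel₀ _ hcard.ne']; exact hR S)
    have hS : #S = #(S.erase i) + 1 := (card_erase_add_one hi).symm
    calc v S = v (S.erase i) + marginal v S i := by rw [marginal]; ring
      _ ≤ harmonic #(S.erase i) * R + R / #S := add_le_add (ih _ (erase_ssubset hi)) hle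
      _ = harmonic #S * R := by rw [hS, harmonic_succ]; push_cast; ring

theorem value_univ_le_harmonic_mul [Fintype ι] (hmono : Monotone v) (hsub : IsSubmodular v)
    (h0 : v ∅ = 0) (hX : IsMaximalDemand v X) {p : ι → ℝ} (hp₀ : 0 ≤ p)
    (hp : IsOptimalPrice X p) : v univ ≤ harmonic (Fintype.card ι) * v (X p) :=
  calc v univ ≤ harmonic (Fintype.card ι) * revenue X p :=
        le_harmonic_mul_of_sum_marginal_le h0 (sum_marginal_le_revenue hmono hsub h0 hX hp) univ
    _ ≤ harmonic (Fintype.card ι) * v (X p) := by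
        gcongr
        · exact_mod_cast harmonic_nonneg _
        · exact hX.revenue_le_value h0 hp₀

end Demand

section Tightness

variable {ι : Type*}

noncomputable def tightValue (ε : ℝ) (S : Finset ι) : ℝ :=
  if #S = 1 then 1 + ε else harmonic #S

variable {ε : ℝ}

lemma harmonic_le_tightValue (hε : 0 ≤ ε) (S : Finset ι) :
    (harmonic #S : ℝ) ≤ tightValue ε S := by
  unfold tightValue
  split_ifs with h
  · rw [h]; simp [harmonic]; linarith
  · exact le_rfl

lemma tightValue_le [Fintype ι] (hε : 0 ≤ ε) (S : Finset ι) :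
    tightValue ε S ≤ 1 + ε + harmonic (Fintype.card ι) := by
  have hmono : (harmonic #S : ℝ) ≤ harmonic (Fintype.card ι) := by
    exact_mod_cast harmonic_monotone (card_le_univ S)
  have hnonneg : (0 : ℝ) ≤ harmonic (Fintype.card ι) := by exact_mod_cast harmonic_nonneg _
  unfold tightValue
  split_ifs <;> linarith

lemma tightValue_le_of_card_le_one (hε : 0 ≤ ε) {S : Finset ι} (hS : #S ≤ 1) :
    tightValue ε S ≤ 1 + ε := by
  interval_cases h : #S <;> simp [tightValue, h]; linarith

variable [DecidableEq ι]

lemma marginal_tightValue_le (hε : 0 ≤ ε) {S : Finset ι} (hS : 2 ≤ #S) {i : ι} (hi : i ∈ S) :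
    marginal (tightValue ε) S i ≤ 1 / #S := by
  have hcard : #S = #(S.erase i) + 1 := (card_erase_add_one hi).symm
  have hS : tightValue ε S = harmonic (#(S.erase i) + 1) := by
    rw [tightValue, if_neg (by omega), hcard]
  have := harmonic_le_tightValue hε (S.erase i)
  rw [marginal, hS, harmonic_succ, hcard]
  push_cast
  rw [one_div]
  linarith

lemma sum_marginal_tightValue_le_one (hε : 0 ≤ ε) {S : Finset ι} (hS : 2 ≤ #S) :
    ∑ i ∈ S, marginal (tightValue ε) S i ≤ 1 :=
  calc ∑ i ∈ S, marginal (tightValue ε) S i ≤ ∑ _i ∈ S, 1 / (#S : ℝ) :=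
        sum_le_sum fun i hi => marginal_tightValue_le hε hS hi
    _ = 1 := by
        rw [sum_const, nsmul_eq_mul, mul_one_div_cancel]
        exact_mod_cast (show #S ≠ 0 by omega)

variable {X : (ι → ℝ) → Finset ι}

lemma one_add_le_revenue_tightValue [Fintype ι] [Nonempty ι] (hε : 0 ≤ ε)
    (hX : IsMaximalDemand (tightValue ε) X) {p : ι → ℝ} (hp : IsOptimalPrice X p) :
    1 + ε ≤ revenue X p := by
  obtain ⟨i₀⟩ := ‹Nonempty ι›
  have h0 : tightValue ε (∅ : Finset ι) = 0 := by simp [tightValue]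
  simpa using hX.sum_le_revenue h0 (tightValue_le hε) (S := {i₀}) (q := fun _ => 1 + ε)
    (fun _ _ => by linarith) (fun T hT => by
      rcases subset_singleton_iff.mp hT with rfl | rfl
      · simp [utility, tightValue]
      · exact le_rfl) hp

theorem card_demand_tightValue_le_one [Fintype ι] [Nonempty ι] (hε : 0 < ε)
    (hX : IsMaximalDemand (tightValue ε) X) {p : ι → ℝ} (hp₀ : 0 ≤ p) (hp : IsOptimalPrice X p) :
    #(X p) ≤ 1 := by
  by_contra! h
  have hlow := one_add_le_revenue_tightValue hε.le hX hp
  have hup : revenue X p ≤ ∑ i ∈ X p, marginal (tightValue ε) (X p) i :=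
    sum_le_sum fun i hi => hX.le_marginal hp₀ hi
  linarith [sum_marginal_tightValue_le_one hε.le h]

end Tightness

theorem stmt19_general {n : ℕ} :
    (∀ v : Finset (Fin n) → ℝ,
      (∀ S T : Finset (Fin n), S ⊆ T → v S ≤ v T) →
      (∀ S T : Finset (Fin n), v (S ∪ T) + v (S ∩ T) ≤ v S + v T) →
      v ∅ = 0 →
      ∀ X : (Fin n → ℝ) → Finset (Fin n),
        (∀ q : Fin n → ℝ, (∀ i, 0 ≤ q i) → ∀ T : Finset (Fin n),
          v T - ∑ i ∈ T, q i ≤ v (X q) - ∑ i ∈ X q, q i) →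
        (∀ q : Fin n → ℝ, (∀ i, 0 ≤ q i) → ∀ T : Finset (Fin n),
          (∀ U : Finset (Fin n), v U - ∑ i ∈ U, q i ≤ v T - ∑ i ∈ T, q i) →
          ¬ X q ⊂ T) →
      ∀ p : Fin n → ℝ, (∀ i, 0 ≤ p i) →
        (∀ q : Fin n → ℝ, (∀ i, 0 ≤ q i) → ∑ j ∈ X q, q j ≤ ∑ j ∈ X p, p j) →
        v Finset.univ ≤ (∑ j ∈ Finset.Icc 1 n, (1 : ℝ) / j) * v (X p)) ∧
    (∀ ε : ℝ, 0 < ε → ε < 1/6 → 2 ≤ n →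
      ∀ v : Finset (Fin n) → ℝ,
      (∀ S : Finset (Fin n),
        v S = if S.card = 1 then 1 + ε
          else ∑ j ∈ Finset.Icc 1 S.card, (1 : ℝ) / j) →
      ∀ X : (Fin n → ℝ) → Finset (Fin n),
        (∀ q : Fin n → ℝ, (∀ i, 0 ≤ q i) → ∀ T : Finset (Fin n),
          v T - ∑ i ∈ T, q i ≤ v (X q) - ∑ i ∈ X q, q i) →
        (∀ q : Fin n → ℝ, (∀ i, 0 ≤ q i) → ∀ T : Finset (Fin n),
          (∀ U : Finset (Fin n), v U - ∑ i ∈ U, q i ≤ v T - ∑ i ∈ T, q i) →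
          ¬ X q ⊂ T) →
      ∀ p : Fin n → ℝ, (∀ i, 0 ≤ p i) →
        (∀ q : Fin n → ℝ, (∀ i, 0 ≤ q i) → ∑ j ∈ X q, q j ≤ ∑ j ∈ X p, p j) →
        (X p).card ≤ 1 ∧ v (X p) ≤ 1 + ε ∧
          v Finset.univ = ∑ j ∈ Finset.Icc 1 n, (1 : ℝ) / j) := by
  refine ⟨fun v hmono hsub h0 X hX hXmax p hp hopt => ?_,
    fun ε hε _ hn v hv X hX hXmax p hp hopt => ?_⟩
  · have := value_univ_le_harmonic_mul hmono hsub h0 ⟨hX, hXmax⟩ hp hopt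
    rwa [Fintype.card_fin, cast_harmonic_eq_sum_Icc] at this
  · obtain rfl : v = tightValue ε := funext fun S => by
      rw [hv, tightValue, cast_harmonic_eq_sum_Icc]
    have : Nonempty (Fin n) := ⟨⟨0, by omega⟩⟩
    have hcard := card_demand_tightValue_le_one hε ⟨hX, hXmax⟩ hp hopt
    refine ⟨hcard, tightValue_le_of_card_le_one hε.le hcard, ?_⟩
    rw [tightValue, if_neg (by simp; omega), card_univ, Fintype.card_fin, cast_harmonic_eq_sum_Icc]

/-- (a) For monotone submodular `v` with `v ∅ = 0` and a maximal
decision map `X`, every revenue-optimal price vector `p` of the monopolistic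
seller satisfies `v (X p) ≥ v(N)/H_n`.
(b) Tightness: for `v S = 1 + ε` if `|S| = 1` and `v S = H_{|S|}` otherwise
(`0 < ε < 1/6`, `n ≥ 2`), every optimal price vector yields `|X p| ≤ 1` and
welfare at most `1 + ε`, while `v(N) = H_n`. -/
theorem stmt19 {n : ℕ} (hn : 1 ≤ n) :
    (∀ v : Finset (Fin n) → ℝ,
      (∀ S T : Finset (Fin n), S ⊆ T → v S ≤ v T) →
      (∀ S T : Finset (Fin n), v (S ∪ T) + v (S ∩ T) ≤ v S + v T) →
      v ∅ = 0 →
      ∀ X : (Fin n → ℝ) → Finset (Fin n),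
        (∀ q : Fin n → ℝ, (∀ i, 0 ≤ q i) → ∀ T : Finset (Fin n),
          v T - ∑ i ∈ T, q i ≤ v (X q) - ∑ i ∈ X q, q i) →
        (∀ q : Fin n → ℝ, (∀ i, 0 ≤ q i) → ∀ T : Finset (Fin n),
          (∀ U : Finset (Fin n), v U - ∑ i ∈ U, q i ≤ v T - ∑ i ∈ T, q i) →
          ¬ X q ⊂ T) →
      ∀ p : Fin n → ℝ, (∀ i, 0 ≤ p i) →
        (∀ q : Fin n → ℝ, (∀ i, 0 ≤ q i) → ∑ j ∈ X q, q j ≤ ∑ j ∈ X p, p j) →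
        v Finset.univ ≤ (∑ j ∈ Finset.Icc 1 n, (1 : ℝ) / j) * v (X p)) ∧
    (∀ ε : ℝ, 0 < ε → ε < 1/6 → 2 ≤ n →
      ∀ v : Finset (Fin n) → ℝ,
      (∀ S : Finset (Fin n),
        v S = if S.card = 1 then 1 + ε
          else ∑ j ∈ Finset.Icc 1 S.card, (1 : ℝ) / j) →
      ∀ X : (Fin n → ℝ) → Finset (Fin n),
        (∀ q : Fin n → ℝ, (∀ i, 0 ≤ q i) → ∀ T : Finset (Fin n),
          v T - ∑ i ∈ T, q i ≤ v (X q) - ∑ i ∈ X q, q i) →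
        (∀ q : Fin n → ℝ, (∀ i, 0 ≤ q i) → ∀ T : Finset (Fin n),
          (∀ U : Finset (Fin n), v U - ∑ i ∈ U, q i ≤ v T - ∑ i ∈ T, q i) →
          ¬ X q ⊂ T) →
      ∀ p : Fin n → ℝ, (∀ i, 0 ≤ p i) →
        (∀ q : Fin n → ℝ, (∀ i, 0 ≤ q i) → ∑ j ∈ X q, q j ≤ ∑ j ∈ X p, p j) →
        (X p).card ≤ 1 ∧ v (X p) ≤ 1 + ε ∧
          v Finset.univ = ∑ j ∈ Finset.Icc 1 n, (1 : ℝ) / j) :=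
  stmt19_general
end
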